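/- (Binary case, p = 2.) Let C be an [n,k] binary code with generator matrix G = (I_k|M). Under the negative degree lexicographic order on F_2[X], the ideal I = I_C'·Loc_>(F_2[X]), where I_C' = ⟨(X_i+1) + ∏_{j∈supp(m_i)}(X_j+1) : 1 ≤ i ≤ k⟩ + ⟨(X_i+1)^2 + 1 : k+1 ≤ i ≤ n⟩, has standard basis S = { X_i − ∑_{∅ ≠ J ⊆ supp(m_i)} X_J : 1 ≤ i ≤ k } ∪ { X_i^2 : k+1 ≤ i ≤ n }, where X_J = ∏_{j∈J} X_j. -/

import Mathlib

/-!
Over `𝔽₂` the generators of `I_C'` are exactly the elements of `S`, since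
`(X_i + 1) + ∏_{j ∈ supp m_i} (X_j + 1) = X_i - ∑_{∅ ≠ J ⊆ supp m_i} X_J` and
`(X_j + 1)² + 1 = X_j²`; their leading monomials are `X_i` (`i ≤ k`) and `X_j²` (`j > k`).

Conversely, substitute `X_i ↦ ∑_{∅ ≠ J ⊆ supp m_i} X_J` for `i ≤ k` and reduce modulo
`⟨X_j² : j > k⟩`. This ring map kills `I_C'` and sends every variable to a nilpotent, hence every
polynomial with constant term `1` to a unit, so it kills every `f` whose image lies in `I`. It never
lowers degrees and fixes the monomials free of `X_1, …, X_k`. Hence if the leading monomial of such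
an `f` were divisible by no `X_i` (`i ≤ k`) and no `X_j²` (`j > k`), it would survive the map with
its coefficient unchanged, while nothing in `⟨X_j² : j > k⟩` contains such a monomial.
-/

open MvPolynomial

noncomputable section

/-- `supp(m_i)` for a binary code: columns `j > k` with `g_{ij} ≠ 0`. -/
def suppM {n k : ℕ} (G : Fin k → Fin n → ZMod 2) (i : Fin k) : Finset (Fin n) :=
  Finset.univ.filter fun j => k ≤ (j : ℕ) ∧ G i j ≠ 0

/-- The translated binary code ideal
`I_C' = ⟨(X_i+1) + ∏_{j∈supp(m_i)}(X_j+1) : i ≤ k⟩ + ⟨(X_i+1)² + 1 : i > k⟩`. -/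
def binCodeIdeal' (n k : ℕ) (hkn : k ≤ n) (G : Fin k → Fin n → ZMod 2) :
    Ideal (MvPolynomial (Fin n) (ZMod 2)) :=
  Ideal.span
    ({f | ∃ i : Fin k, f = (X (Fin.castLE hkn i) + 1) + ∏ j ∈ suppM G i, (X j + 1)} ∪
      {f | ∃ i : Fin n, k ≤ (i : ℕ) ∧ f = (X i + 1) ^ 2 + 1})

def lexGt {n : ℕ} (a b : Fin n →₀ ℕ) : Prop :=
  ∃ i : Fin n, (∀ j, j < i → a j = b j) ∧ b i < a i

/-- Negative degree lexicographic order (a local order). -/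
def negDegLexGt {n : ℕ} (a b : Fin n →₀ ℕ) : Prop :=
  (∑ j, a j) < (∑ j, b j) ∨ ((∑ j, a j) = (∑ j, b j) ∧ lexGt a b)

def IsLeadMon {σ : Type*} {K : Type*} [CommSemiring K]
    (r : (σ →₀ ℕ) → (σ →₀ ℕ) → Prop) (f : MvPolynomial σ K) (α : σ →₀ ℕ) : Prop :=
  α ∈ f.support ∧ ∀ β ∈ f.support, β ≠ α → r α β

/-- The multiplicative set of polynomials with constant term `1`. -/
def unitSet (n : ℕ) (K : Type*) [CommSemiring K] : Submonoid (MvPolynomial (Fin n) K) :=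
  Submonoid.comap
    (constantCoeff : MvPolynomial (Fin n) K →+* K).toMonoidHom (⊥ : Submonoid K)

/-- Leading terms (w.r.t. negative degree lex) of the members of `S`. -/
def LTset {n : ℕ} {K : Type*} [CommSemiring K] (S : Set (MvPolynomial (Fin n) K)) :
    Set (MvPolynomial (Fin n) K) :=
  {m | ∃ f ∈ S, ∃ α, IsLeadMon negDegLexGt f α ∧ m = monomial α (f.coeff α)}

namespace MvPolynomial

variable {σ R : Type*}

section CommSemiring

variable [CommSemiring R]

theorem coeff_aeval_monomial_eq_zero_of_degree_lt {g : σ → MvPolynomial σ R}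
    (hg : ∀ i, g i ∈ idealOfVars σ R) {α β : σ →₀ ℕ} (h : α.degree < β.degree) (c : R) :
    coeff α (aeval g (monomial β c)) = 0 := by
  have hvars : idealOfVars σ R ≤ (idealOfVars σ R).comap (aeval g) :=
    Ideal.span_le.mpr (Set.range_subset_iff.mpr fun i => by simpa using hg i)
  have hβ : monomial β c ∈ idealOfVars σ R ^ β.degree :=
    (mem_pow_idealOfVars_iff _ _).mpr fun x hx => by
      rw [Finset.mem_singleton.mp (support_monomial_subset hx)]
  have := Ideal.le_comap_pow _ _ (Ideal.pow_right_mono hvars _ hβ)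
  exact (mem_pow_idealOfVars_iff' _ _).mp this α h

theorem aeval_eq_self_of_mem_supported {s : Set σ} {g : σ → MvPolynomial σ R}
    (hg : ∀ i ∈ s, g i = X i) {p : MvPolynomial σ R} (hp : p ∈ supported R s) :
    aeval g p = p := by
  rw [supported_eq_range_rename, AlgHom.mem_range] at hp
  obtain ⟨q, rfl⟩ := hp
  have : g ∘ ((↑) : s → σ) = X ∘ (↑) := _root_.funext fun i => hg i i.2
  rw [aeval_rename, this, rename_eq_aeval]

theorem monomial_mem_supported {s : Set σ} {β : σ →₀ ℕ} (hβ : ↑β.support ⊆ s) (c : R) :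
    monomial β c ∈ supported R s := by
  rw [mem_supported]
  intro j hj
  obtain ⟨d, hd, hjd⟩ := (mem_vars_iff_mem_support j).mp hj
  rw [Finset.mem_singleton.mp (support_monomial_subset hd)] at hjd
  exact hβ hjd

theorem monomial_mem_span_of_le {T : Set (MvPolynomial σ R)} {s α : σ →₀ ℕ}
    (hs : monomial s 1 ∈ T) (h : s ≤ α) (c : R) : monomial α c ∈ Ideal.span T :=
  Ideal.mem_of_dvd _ (monomial_dvd_monomial.mpr ⟨Or.inr h, one_dvd c⟩) (Ideal.subset_span hs)

end CommSemiring

section CommRing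

variable [CommRing R]

theorem sub_C_constantCoeff_mem_idealOfVars (p : MvPolynomial σ R) :
    p - C (constantCoeff p) ∈ idealOfVars σ R := by
  rw [← pow_one (idealOfVars σ R), mem_pow_idealOfVars_iff']
  intro x hx
  obtain rfl : x = 0 := by simpa [Finsupp.degree_eq_zero_iff] using hx
  simp [← constantCoeff_eq]

theorem isUnit_of_isNilpotent_X {A : Type*} [CommRing A] (φ : MvPolynomial σ R →+* A)
    (hX : ∀ i, IsNilpotent (φ (X i))) {p : MvPolynomial σ R} (hp : IsUnit (constantCoeff p)) :
    IsUnit (φ p) := by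
  have hvars : idealOfVars σ R ≤ (nilradical A).comap φ :=
    Ideal.span_le.mpr (Set.range_subset_iff.mpr fun i => mem_nilradical.mpr (hX i))
  have hnil : IsNilpotent (φ p - φ (C (constantCoeff p))) := by
    rw [← map_sub]
    exact mem_nilradical.mp (hvars (sub_C_constantCoeff_mem_idealOfVars p))
  simpa using hnil.isUnit_add_left_of_commute ((hp.map C).map φ) (Commute.all _ _)

end CommRing

end MvPolynomial

theorem CharTwo.add_one_sq_add_one {R : Type*} [CommRing R] [CharP R 2] (x : R) :
    (x + 1) ^ 2 + 1 = x ^ 2 := by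
  rw [add_sq, one_pow, add_assoc, add_self_eq_zero, add_zero]

theorem CharTwo.add_one_add_prod_add_one {R ι : Type*} [CommRing R] [CharP R 2] [DecidableEq ι]
    (x : R) (s : Finset ι) (y : ι → R) :
    (x + 1) + ∏ j ∈ s, (y j + 1) =
      x - ∑ J ∈ s.powerset.filter (fun J => J ≠ ∅), ∏ j ∈ J, y j := by
  rw [Finset.prod_add_one, Finset.filter_ne',
    ← Finset.add_sum_erase _ _ (Finset.empty_mem_powerset s), Finset.prod_empty]
  linear_combination
    (1 + ∑ J ∈ s.powerset.erase ∅, ∏ j ∈ J, y j) * CharTwo.two_eq_zero (R := R)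

theorem isLeadMon_monomial {σ K : Type*} [CommSemiring K] (r : (σ →₀ ℕ) → (σ →₀ ℕ) → Prop)
    {α : σ →₀ ℕ} {c : K} (hc : c ≠ 0) : IsLeadMon r (monomial α c) α := by
  classical
  refine ⟨by rwa [mem_support_iff, coeff_monomial, if_pos rfl], fun β hβ hne => ?_⟩
  exact absurd (Finset.mem_singleton.mp (support_monomial_subset hβ)) hne

theorem IsLeadMon.ne_zero {σ K : Type*} [CommSemiring K] {r : (σ →₀ ℕ) → (σ →₀ ℕ) → Prop}
    {f : MvPolynomial σ K} {α : σ →₀ ℕ} (h : IsLeadMon r f α) : f ≠ 0 := by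
  rintro rfl
  simpa using h.1

theorem lexGt_single_one {n : ℕ} {i : Fin n} {b : Fin n →₀ ℕ} (hb : ∀ j ≤ i, b j = 0) :
    lexGt (Finsupp.single i 1) b :=
  ⟨i, fun j hj => by rw [Finsupp.single_eq_of_ne hj.ne, hb j hj.le], by simp [hb i le_rfl]⟩

theorem lexGt.eq_zero_of_lt {n k : ℕ} {a b : Fin n →₀ ℕ} (hab : lexGt a b)
    (ha : ∀ j : Fin n, (j : ℕ) < k → a j = 0) {j : Fin n} (hj : (j : ℕ) < k) : b j = 0 := by
  obtain ⟨i, heq, hlt⟩ := hab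
  have hi : k ≤ (i : ℕ) := by
    by_contra h
    rw [ha i (not_le.mp h)] at hlt
    exact Nat.not_lt_zero _ hlt
  rw [← heq j (Fin.lt_def.mpr (lt_of_lt_of_le hj hi)), ha j hj]

namespace BinaryCode

variable {n k : ℕ} (G : Fin k → Fin n → ZMod 2)

def suppSum (i : Fin k) : MvPolynomial (Fin n) (ZMod 2) :=
  ∑ J ∈ (suppM G i).powerset.filter (fun J => J ≠ ∅), ∏ j ∈ J, X j

def highIdeal (n k : ℕ) : Ideal (MvPolynomial (Fin n) (ZMod 2)) :=
  Ideal.span (X '' {j | k ≤ (j : ℕ)})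

def sqIdeal (n k : ℕ) : Ideal (MvPolynomial (Fin n) (ZMod 2)) :=
  Ideal.span ((fun j => monomial (Finsupp.single j 2) 1) '' {j | k ≤ (j : ℕ)})

theorem le_of_mem_suppM {i : Fin k} {j : Fin n} (h : j ∈ suppM G i) : k ≤ (j : ℕ) :=
  (Finset.mem_filter.mp h).2.1

theorem add_one_add_prod_eq_X_sub_suppSum (hkn : k ≤ n) (i : Fin k) :
    (X (Fin.castLE hkn i) + 1) + ∏ j ∈ suppM G i, (X j + 1) =
      X (Fin.castLE hkn i) - suppSum G i :=
  CharTwo.add_one_add_prod_add_one _ _ _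

theorem suppSum_mem_supported (i : Fin k) :
    suppSum G i ∈ supported (ZMod 2) {j : Fin n | k ≤ (j : ℕ)} :=
  Subalgebra.sum_mem _ fun _ hJ => Subalgebra.prod_mem _ fun _ hj => X_mem_supported.mpr
    (le_of_mem_suppM G (Finset.mem_powerset.mp (Finset.mem_filter.mp hJ).1 hj))

theorem suppSum_mem_highIdeal (i : Fin k) : suppSum G i ∈ highIdeal n k := by
  refine Ideal.sum_mem _ fun J hJ => ?_
  obtain ⟨hJs, hJne⟩ := Finset.mem_filter.mp hJ
  obtain ⟨j, hj⟩ := Finset.nonempty_iff_ne_empty.mpr hJne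
  rw [← Finset.mul_prod_erase J _ hj]
  exact Ideal.mul_mem_right _ _
    (Ideal.subset_span ⟨j, le_of_mem_suppM G (Finset.mem_powerset.mp hJs hj), rfl⟩)

theorem highIdeal_le_idealOfVars : highIdeal n k ≤ idealOfVars (Fin n) (ZMod 2) :=
  Ideal.span_mono (Set.image_subset_range _ _)

theorem eq_zero_of_mem_support_suppSum {i : Fin k} {β : Fin n →₀ ℕ}
    (hβ : β ∈ (suppSum G i).support) {j : Fin n} (hj : (j : ℕ) < k) : β j = 0 := by
  by_contra h
  have := mem_supported.mp (suppSum_mem_supported G i)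
    ((mem_vars_iff_mem_support j).mpr ⟨β, hβ, Finsupp.mem_support_iff.mpr h⟩)
  exact absurd this (not_le.mpr hj)

theorem one_le_degree_of_mem_support_suppSum {i : Fin k} {β : Fin n →₀ ℕ}
    (hβ : β ∈ (suppSum G i).support) : 1 ≤ β.degree := by
  have := highIdeal_le_idealOfVars (suppSum_mem_highIdeal G i)
  rw [← pow_one (idealOfVars _ _), mem_pow_idealOfVars_iff] at this
  exact this β hβ

theorem coeff_X_sub_suppSum (hkn : k ≤ n) (i : Fin k) :
    coeff (Finsupp.single (Fin.castLE hkn i) 1) (X (Fin.castLE hkn i) - suppSum G i) = 1 := by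
  have h : Finsupp.single (Fin.castLE hkn i) 1 ∉ (suppSum G i).support := fun h => by
    simpa using eq_zero_of_mem_support_suppSum G h (j := Fin.castLE hkn i) i.isLt
  rw [coeff_sub, coeff_X, if_pos rfl, notMem_support_iff.mp h, sub_zero]

theorem isLeadMon_X_sub_suppSum (hkn : k ≤ n) (i : Fin k) :
    IsLeadMon negDegLexGt (X (Fin.castLE hkn i) - suppSum G i)
      (Finsupp.single (Fin.castLE hkn i) 1) := by
  refine ⟨by rw [mem_support_iff, coeff_X_sub_suppSum]; exact one_ne_zero, fun β hβ hne => ?_⟩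
  have hβ' : β ∈ (suppSum G i).support := by
    rcases Finset.mem_union.mp (support_sub _ _ _ hβ) with h | h
    · rw [support_X, Finset.mem_singleton] at h
      exact absurd h hne
    · exact h
  simp only [negDegLexGt, ← Finsupp.degree_eq_sum, Finsupp.degree_single]
  rcases (one_le_degree_of_mem_support_suppSum G hβ').lt_or_eq with h | h
  · exact Or.inl h
  · refine Or.inr ⟨h, lexGt_single_one fun j hj => ?_⟩
    exact eq_zero_of_mem_support_suppSum G hβ' (lt_of_le_of_lt (Fin.le_def.mp hj) i.isLt)

def subst (j : Fin n) : MvPolynomial (Fin n) (ZMod 2) :=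
  if h : (j : ℕ) < k then suppSum G ⟨j, h⟩ else X j

def substHom : MvPolynomial (Fin n) (ZMod 2) →ₐ[ZMod 2] MvPolynomial (Fin n) (ZMod 2) :=
  aeval (subst G)

theorem substHom_X (j : Fin n) : substHom G (X j) = subst G j :=
  aeval_X _ _

theorem subst_mem_highIdeal (j : Fin n) : subst G j ∈ highIdeal n k := by
  unfold subst
  split_ifs with h
  · exact suppSum_mem_highIdeal G _
  · exact Ideal.subset_span ⟨j, not_lt.mp h, rfl⟩

theorem substHom_eq_self {p : MvPolynomial (Fin n) (ZMod 2)}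
    (hp : p ∈ supported (ZMod 2) {j : Fin n | k ≤ (j : ℕ)}) : substHom G p = p := by
  refine aeval_eq_self_of_mem_supported (fun j hj => ?_) hp
  exact dif_neg (not_lt.mpr hj)

theorem substHom_mem_sqIdeal (hkn : k ≤ n) {f : MvPolynomial (Fin n) (ZMod 2)}
    (hf : f ∈ binCodeIdeal' n k hkn G) : substHom G f ∈ sqIdeal n k := by
  refine (Ideal.span_le (I := (sqIdeal n k).comap (substHom G))).mpr ?_ hf
  rintro _ (⟨i, rfl⟩ | ⟨j, hj, rfl⟩) <;> rw [SetLike.mem_coe, Ideal.mem_comap]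
  · have hi : subst G (Fin.castLE hkn i) = suppSum G i := dif_pos i.isLt
    rw [add_one_add_prod_eq_X_sub_suppSum, map_sub, substHom_X, hi,
      substHom_eq_self G (suppSum_mem_supported G i), sub_self]
    exact Ideal.zero_mem _
  · rw [CharTwo.add_one_sq_add_one, map_pow, substHom_X, subst, dif_neg (not_lt.mpr hj),
      X_pow_eq_monomial]
    exact Ideal.subset_span ⟨j, hj, rfl⟩

theorem coeff_eq_zero_of_mem_sqIdeal {p : MvPolynomial (Fin n) (ZMod 2)} (hp : p ∈ sqIdeal n k)
    {α : Fin n →₀ ℕ} (hα : ∀ j : Fin n, k ≤ (j : ℕ) → α j ≤ 1) : coeff α p = 0 := by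
  rw [sqIdeal, ← Set.image_image (fun s => monomial s (1 : ZMod 2)),
    mem_ideal_span_monomial_image] at hp
  by_contra h
  obtain ⟨_, ⟨j, hj, rfl⟩, hle⟩ := hp α (mem_support_iff.mpr h)
  have := (Finsupp.single_le_iff.mp hle).trans (hα j hj)
  omega

theorem isNilpotent_mk_substHom_X (j : Fin n) :
    IsNilpotent (Ideal.Quotient.mk (sqIdeal n k) (substHom G (X j))) := by
  have hle : highIdeal n k ≤
      (nilradical (MvPolynomial (Fin n) (ZMod 2) ⧸ sqIdeal n k)).comap (Ideal.Quotient.mk _) := by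
    refine Ideal.span_le.mpr ?_
    rintro _ ⟨j, hj, rfl⟩
    refine mem_nilradical.mpr ⟨2, ?_⟩
    rw [← map_pow, Ideal.Quotient.eq_zero_iff_mem, X_pow_eq_monomial]
    exact Ideal.subset_span ⟨j, hj, rfl⟩
  rw [substHom_X]
  exact mem_nilradical.mp (hle (subst_mem_highIdeal G j))

theorem substHom_mem_sqIdeal_of_algebraMap_mem (hkn : k ≤ n) {f : MvPolynomial (Fin n) (ZMod 2)}
    (hf : algebraMap (MvPolynomial (Fin n) (ZMod 2)) (Localization (unitSet n (ZMod 2))) f ∈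
      (binCodeIdeal' n k hkn G).map (algebraMap _ _)) :
    substHom G f ∈ sqIdeal n k := by
  obtain ⟨u, hu, huf⟩ :=
    (IsLocalization.algebraMap_mem_map_algebraMap_iff (unitSet n (ZMod 2)) _ _ _).mp hf
  let ψ := (Ideal.Quotient.mk (sqIdeal n k)).comp (substHom G).toRingHom
  have hunit : IsUnit (ψ u) := by
    refine isUnit_of_isNilpotent_X ψ (isNilpotent_mk_substHom_X G) ?_
    have hu1 : constantCoeff u = 1 := Submonoid.mem_bot.mp (Submonoid.mem_comap.mp hu)
    exact hu1 ▸ isUnit_one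
  have hψ : ψ u * ψ f = 0 := by
    rw [← map_mul]
    exact Ideal.Quotient.eq_zero_iff_mem.mpr (substHom_mem_sqIdeal G hkn huf)
  exact Ideal.Quotient.eq_zero_iff_mem.mp (hunit.mul_right_eq_zero.mp hψ)

theorem substHom_monomial {β : Fin n →₀ ℕ} (hβ : ∀ j : Fin n, (j : ℕ) < k → β j = 0)
    (c : ZMod 2) : substHom G (monomial β c) = monomial β c :=
  substHom_eq_self G (monomial_mem_supported (fun j hj => not_lt.mp fun h =>
    Finsupp.mem_support_iff.mp hj (hβ j h)) c)

theorem coeff_substHom_of_isLeadMon {f : MvPolynomial (Fin n) (ZMod 2)} {α : Fin n →₀ ℕ}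
    (hα : IsLeadMon negDegLexGt f α) (hlow : ∀ j : Fin n, (j : ℕ) < k → α j = 0) :
    coeff α (substHom G f) = coeff α f := by
  conv_lhs => rw [f.as_sum, map_sum, coeff_sum]
  rw [Finset.sum_eq_single α]
  · rw [substHom_monomial G hlow, coeff_monomial, if_pos rfl]
  · intro β hβ hne
    rcases hα.2 β hβ hne with hdeg | ⟨-, hlex⟩
    · rw [← Finsupp.degree_eq_sum, ← Finsupp.degree_eq_sum] at hdeg
      exact coeff_aeval_monomial_eq_zero_of_degree_lt
        (fun j => highIdeal_le_idealOfVars (subst_mem_highIdeal G j)) hdeg _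
    · rw [substHom_monomial G (fun j => hlex.eq_zero_of_lt hlow), coeff_monomial, if_neg hne]
  · exact fun h => absurd hα.1 h

theorem exists_single_le_of_isLeadMon (hkn : k ≤ n) {f : MvPolynomial (Fin n) (ZMod 2)}
    (hf : algebraMap (MvPolynomial (Fin n) (ZMod 2)) (Localization (unitSet n (ZMod 2))) f ∈
      (binCodeIdeal' n k hkn G).map (algebraMap _ _))
    {α : Fin n →₀ ℕ} (hα : IsLeadMon negDegLexGt f α) :
    (∃ i : Fin k, Finsupp.single (Fin.castLE hkn i) 1 ≤ α) ∨
      ∃ j : Fin n, k ≤ (j : ℕ) ∧ Finsupp.single j 2 ≤ α := by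
  by_contra! h
  have hlow : ∀ j : Fin n, (j : ℕ) < k → α j = 0 := fun j hj => by
    simpa [Finsupp.single_le_iff] using h.1 ⟨j, hj⟩
  have hhigh : ∀ j : Fin n, k ≤ (j : ℕ) → α j ≤ 1 := fun j hj => by
    simpa [Finsupp.single_le_iff, Nat.lt_succ_iff] using h.2 j hj
  have h0 :=
    coeff_eq_zero_of_mem_sqIdeal (substHom_mem_sqIdeal_of_algebraMap_mem G hkn hf) hhigh
  rw [coeff_substHom_of_isLeadMon G hα hlow] at h0
  exact mem_support_iff.mp hα.1 h0

def stdBasis (hkn : k ≤ n) : Set (MvPolynomial (Fin n) (ZMod 2)) :=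
  {f | ∃ i : Fin k, f = X (Fin.castLE hkn i) - suppSum G i} ∪
    {f | ∃ j : Fin n, k ≤ (j : ℕ) ∧ f = X j ^ 2}

theorem algebraMap_mem_of_mem_stdBasis (hkn : k ≤ n) {f : MvPolynomial (Fin n) (ZMod 2)}
    (hf : f ∈ stdBasis G hkn) :
    algebraMap (MvPolynomial (Fin n) (ZMod 2)) (Localization (unitSet n (ZMod 2))) f ∈
      (binCodeIdeal' n k hkn G).map (algebraMap _ _) := by
  refine Ideal.mem_map_of_mem _ (Ideal.subset_span ?_)
  rcases hf with ⟨i, rfl⟩ | ⟨j, hj, rfl⟩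
  · exact Or.inl ⟨i, (add_one_add_prod_eq_X_sub_suppSum G hkn i).symm⟩
  · exact Or.inr ⟨j, hj, (CharTwo.add_one_sq_add_one _).symm⟩

theorem monomial_mem_span_LTset_stdBasis (hkn : k ≤ n) {f : MvPolynomial (Fin n) (ZMod 2)}
    (hf : algebraMap (MvPolynomial (Fin n) (ZMod 2)) (Localization (unitSet n (ZMod 2))) f ∈
      (binCodeIdeal' n k hkn G).map (algebraMap _ _))
    {α : Fin n →₀ ℕ} (hα : IsLeadMon negDegLexGt f α) (c : ZMod 2) :
    monomial α c ∈ Ideal.span (LTset (stdBasis G hkn)) := by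
  rcases exists_single_le_of_isLeadMon G hkn hf hα with ⟨i, hle⟩ | ⟨j, hj, hle⟩
  · refine monomial_mem_span_of_le ?_ hle c
    exact ⟨_, Or.inl ⟨i, rfl⟩, _, isLeadMon_X_sub_suppSum G hkn i,
      by rw [coeff_X_sub_suppSum]⟩
  · refine monomial_mem_span_of_le ?_ hle c
    refine ⟨_, Or.inr ⟨j, hj, rfl⟩, Finsupp.single j 2, ?_, ?_⟩ <;> rw [X_pow_eq_monomial]
    · exact isLeadMon_monomial _ one_ne_zero
    · rw [coeff_monomial, if_pos rfl]

end BinaryCode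

theorem binary_standard_basis_general (n k : ℕ) (hkn : k ≤ n)
    (G : Fin k → Fin n → ZMod 2) :
    let Sset : Set (MvPolynomial (Fin n) (ZMod 2)) :=
      {f | ∃ i : Fin k, f = X (Fin.castLE hkn i) -
          ∑ J ∈ (suppM G i).powerset.filter (fun J => J ≠ ∅), ∏ j ∈ J, X j} ∪
        {f | ∃ i : Fin n, k ≤ (i : ℕ) ∧ f = X i ^ 2}
    let Loc := Localization (unitSet n (ZMod 2))
    let I : Ideal Loc :=
      Ideal.map (algebraMap (MvPolynomial (Fin n) (ZMod 2)) Loc) (binCodeIdeal' n k hkn G)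
    let ltI : Ideal (MvPolynomial (Fin n) (ZMod 2)) :=
      Ideal.span (LTset {f | algebraMap (MvPolynomial (Fin n) (ZMod 2)) Loc f ∈ I ∧ f ≠ 0})
    (∀ f ∈ Sset, algebraMap (MvPolynomial (Fin n) (ZMod 2)) Loc f ∈ I) ∧
    Ideal.span (LTset Sset) = ltI := by
  intro Sset Loc I ltI
  have hS : ∀ f ∈ Sset, algebraMap (MvPolynomial (Fin n) (ZMod 2)) Loc f ∈ I :=
    fun _ hf => BinaryCode.algebraMap_mem_of_mem_stdBasis G hkn hf
  refine ⟨hS, le_antisymm (Ideal.span_mono ?_) (Ideal.span_le.mpr ?_)⟩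
  · rintro _ ⟨f, hf, α, hα, rfl⟩
    exact ⟨f, ⟨hS f hf, hα.ne_zero⟩, α, hα, rfl⟩
  · rintro _ ⟨f, ⟨hf, -⟩, α, hα, rfl⟩
    exact BinaryCode.monomial_mem_span_LTset_stdBasis G hkn hf hα _

/-- Binary case (`p = 2`): `S = {X_i - ∑_{∅ ≠ J ⊆ supp(m_i)} X_J} ∪ {X_i²}` is a standard
basis of `I = I_C'·Loc_>(F_2[X])` under the negative degree lexicographic order. -/
theorem binary_standard_basis (n k : ℕ) (hkn : k ≤ n)
    (G : Fin k → Fin n → ZMod 2)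
    (hstd : ∀ i j : Fin k, G i (Fin.castLE hkn j) = if i = j then 1 else 0) :
    let Sset : Set (MvPolynomial (Fin n) (ZMod 2)) :=
      {f | ∃ i : Fin k, f = X (Fin.castLE hkn i) -
          ∑ J ∈ (suppM G i).powerset.filter (fun J => J ≠ ∅), ∏ j ∈ J, X j} ∪
        {f | ∃ i : Fin n, k ≤ (i : ℕ) ∧ f = X i ^ 2}
    let Loc := Localization (unitSet n (ZMod 2))
    let I : Ideal Loc :=
      Ideal.map (algebraMap (MvPolynomial (Fin n) (ZMod 2)) Loc) (binCodeIdeal' n k hkn G)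
    let ltI : Ideal (MvPolynomial (Fin n) (ZMod 2)) :=
      Ideal.span (LTset {f | algebraMap (MvPolynomial (Fin n) (ZMod 2)) Loc f ∈ I ∧ f ≠ 0})
    (∀ f ∈ Sset, algebraMap (MvPolynomial (Fin n) (ZMod 2)) Loc f ∈ I) ∧
    Ideal.span (LTset Sset) = ltI :=
  binary_standard_basis_general n k hkn G

end
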